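/- Let A be a (possibly noncommutative) unital ring, 𝒩 a set, B : 𝒩 → A a function, and n̲ = n₁⋯n_r a nonempty word on 𝒩. For a word w̲ = w₁⋯w_s write B_{w̲} := B_{w₁}B_{w₂}⋯B_{w_s} (with B_∅ := 1), write [x,y] := xy − yx, and write B_{[n̲]} := [B_{n₁},[B_{n₂},…,[B_{n_{r−1}},B_{n_r}]⋯]] for the right-iterated commutator (with B_{[n₁]} = B_{n₁}). Then B_{[n̲]} = Σ_{(a̲,b̲) ∈ 𝒩̲×𝒩̲} (−1)^{r(b̲)} · r(a̲) · sh^{a̲,b̲}_{n̲} · B_{a̲ b̲~}, where b̲~ denotes the reversal of b̲, a̲ b̲~ denotes concatenation, and the sum is finite since sh^{a̲,b̲}_{n̲} = 0 unless a̲ and b̲ interleave to n̲. -/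
import Mathlib


open scoped Classical

/-- Shuffle coefficient: the number of ways the word `n` can be obtained by interleaving
the letters of `a` and `b` while preserving their internal orders. -/
noncomputable def sh {𝒩 : Type*} : List 𝒩 → List 𝒩 → List 𝒩 → ℕ
  | [], b, n => if b = n then 1 else 0
  | a, [], n => if a = n then 1 else 0
  | _ :: _, _ :: _, [] => 0
  | x :: a, y :: b, z :: n =>
      (if x = z then sh a (y :: b) n else 0) + (if y = z then sh (x :: a) b n else 0)

/-- The right-iterated commutator
`B_{[n]} = [B_{n₁},[B_{n₂},…,[B_{n_{r−1}},B_{n_r}]⋯]]`, with `B_{[n₁]} = B_{n₁}`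
(and value `0` on the empty word, which is irrelevant below). -/
noncomputable def lieWord {𝒩 A : Type*} [Ring A] (B : 𝒩 → A) : List 𝒩 → A
  | [] => 0
  | [x] => B x
  | x :: y :: t => B x * lieWord B (y :: t) - lieWord B (y :: t) * B x

lemma sh_nil_left {𝒩 : Type*} (b n : List 𝒩) : sh [] b n = if b = n then 1 else 0 := by
  simp [sh]

lemma sh_nil_right {𝒩 : Type*} (a n : List 𝒩) : sh a [] n = if a = n then 1 else 0 := by
  cases a <;> simp [sh]

lemma sh_sublist {𝒩 : Type*} : ∀ (n a b : List 𝒩), sh a b n ≠ 0 → a.Sublist n ∧ b.Sublist n := by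
  intro n
  induction n with
  | nil =>
    rintro (_|⟨x,a⟩) (_|⟨y,b⟩) h <;> simp_all [sh]
  | cons z n ih =>
    rintro (_|⟨x,a⟩) (_|⟨y,b⟩) h
    · simp_all [sh]
    · have hb : y :: b = z :: n := by
        by_contra hc; simp [sh, hc] at h
      rw [hb]; exact ⟨List.nil_sublist _, List.Sublist.refl _⟩
    · have ha : x :: a = z :: n := by
        by_contra hc; simp [sh, hc] at h
      rw [ha]; exact ⟨List.Sublist.refl _, List.nil_sublist _⟩
    · rw [sh] at h
      by_cases hx : x = z <;> by_cases hy : y = z <;> simp [hx, hy] at h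
      · subst hx; subst hy
        by_cases h1 : sh a (y :: b) n = 0
        · obtain ⟨ha, hb⟩ := ih (y :: a) b (h h1)
          exact ⟨ha.cons _, hb.cons₂ _⟩
        · obtain ⟨ha, hb⟩ := ih a (y :: b) h1
          exact ⟨ha.cons₂ _, hb.cons _⟩
      · subst hx
        obtain ⟨ha, hb⟩ := ih a (y :: b) h
        exact ⟨ha.cons₂ _, hb.cons _⟩
      · subst hy
        obtain ⟨ha, hb⟩ := ih (x :: a) b h
        exact ⟨ha.cons _, hb.cons₂ _⟩

/-- The finite set of pairs supporting the shuffle sums. -/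
noncomputable def shS {𝒩 : Type*} (n : List 𝒩) : Finset (List 𝒩 × List 𝒩) :=
  n.sublists.toFinset ×ˢ n.sublists.toFinset

lemma mem_shS {𝒩 : Type*} {p : List 𝒩 × List 𝒩} {n : List 𝒩} :
    p ∈ shS n ↔ p.1.Sublist n ∧ p.2.Sublist n := by
  simp [shS, Finset.mem_product, List.mem_sublists]

lemma mem_shS_of_sh_ne_zero {𝒩 : Type*} {p : List 𝒩 × List 𝒩} {n : List 𝒩}
    (h : sh p.1 p.2 n ≠ 0) : p ∈ shS n :=
  mem_shS.mpr (sh_sublist n p.1 p.2 h)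

/-- Key recursion: splitting the shuffle sum along the first letter of `n`. -/
lemma sum_sh_cons {𝒩 A : Type*} [Ring A] (x : 𝒩) (m : List 𝒩) (F : List 𝒩 × List 𝒩 → A) :
    ∑ p ∈ shS (x :: m), (sh p.1 p.2 (x :: m) : A) * F p
      = (∑ p ∈ shS m, (sh p.1 p.2 m : A) * F (x :: p.1, p.2))
      + ∑ p ∈ shS m, (sh p.1 p.2 m : A) * F (p.1, x :: p.2) := by
  classical
  set A1 : List 𝒩 × List 𝒩 → A := fun p =>
    match p with
    | ([], _) => 0
    | (a :: as, b) => if a = x then (sh as b m : A) * F (a :: as, b) else 0 with hA1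
  set A2 : List 𝒩 × List 𝒩 → A := fun p =>
    match p with
    | (_, []) => 0
    | (a, b :: bs) => if b = x then (sh a bs m : A) * F (a, b :: bs) else 0 with hA2
  have hsplit : ∀ p : List 𝒩 × List 𝒩, (sh p.1 p.2 (x :: m) : A) * F p = A1 p + A2 p := by
    rintro ⟨(_|⟨a,as⟩), (_|⟨b,bs⟩)⟩
    · simp [sh, hA1, hA2]
    · by_cases hb : b = x <;> by_cases hbs : bs = m <;>
        simp [sh, sh_nil_left, hA1, hA2, hb, hbs, List.cons_eq_cons]
    · by_cases ha : a = x <;> by_cases has : as = m <;>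
        simp [sh, sh_nil_right, hA1, hA2, ha, has, List.cons_eq_cons]
    · by_cases ha : a = x <;> by_cases hb : b = x <;>
        simp [sh, hA1, hA2, ha, hb, add_mul]
  rw [Finset.sum_congr rfl (fun p _ => hsplit p), Finset.sum_add_distrib]
  congr 1
  · -- sum of A1
    have hinj : ∀ q ∈ shS m, ∀ q' ∈ shS m,
        (fun q : List 𝒩 × List 𝒩 => (x :: q.1, q.2)) q
          = (fun q : List 𝒩 × List 𝒩 => (x :: q.1, q.2)) q' → q = q' := by
      rintro ⟨a, b⟩ _ ⟨a', b'⟩ _ h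
      simp only [Prod.mk.injEq, List.cons.injEq] at h
      simp [h.1.2, h.2]
    have himg : ((shS m).image (fun q : List 𝒩 × List 𝒩 => (x :: q.1, q.2))) ⊆ shS (x :: m) := by
      intro p hp
      obtain ⟨q, hq, rfl⟩ := Finset.mem_image.mp hp
      obtain ⟨h1, h2⟩ := mem_shS.mp hq
      exact mem_shS.mpr ⟨h1.cons₂ _, h2.cons _⟩
    have hzero : ∀ p ∈ shS (x :: m),
        p ∉ ((shS m).image (fun q : List 𝒩 × List 𝒩 => (x :: q.1, q.2))) → A1 p = 0 := by
      rintro ⟨(_|⟨a,as⟩), b⟩ hp hnp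
      · simp [hA1]
      · simp only [hA1]
        by_cases ha : a = x
        · subst ha
          have hz : sh as b m = 0 := by
            by_contra hc
            exact hnp (Finset.mem_image.mpr ⟨(as, b), mem_shS_of_sh_ne_zero hc, rfl⟩)
          simp [hz]
        · simp [ha]
    rw [← Finset.sum_subset himg hzero, Finset.sum_image hinj]
    apply Finset.sum_congr rfl
    rintro ⟨a, b⟩ _
    simp [hA1]
  · -- sum of A2
    have hinj : ∀ q ∈ shS m, ∀ q' ∈ shS m,
        (fun q : List 𝒩 × List 𝒩 => (q.1, x :: q.2)) q
          = (fun q : List 𝒩 × List 𝒩 => (q.1, x :: q.2)) q' → q = q' := by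
      rintro ⟨a, b⟩ _ ⟨a', b'⟩ _ h
      simp only [Prod.mk.injEq, List.cons.injEq] at h
      simp [h.1, h.2.2]
    have himg : ((shS m).image (fun q : List 𝒩 × List 𝒩 => (q.1, x :: q.2))) ⊆ shS (x :: m) := by
      intro p hp
      obtain ⟨q, hq, rfl⟩ := Finset.mem_image.mp hp
      obtain ⟨h1, h2⟩ := mem_shS.mp hq
      exact mem_shS.mpr ⟨h1.cons _, h2.cons₂ _⟩
    have hzero : ∀ p ∈ shS (x :: m),
        p ∉ ((shS m).image (fun q : List 𝒩 × List 𝒩 => (q.1, x :: q.2))) → A2 p = 0 := by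
      rintro ⟨a, (_|⟨b,bs⟩)⟩ hp hnp
      · simp [hA2]
      · simp only [hA2]
        by_cases hb : b = x
        · subst hb
          have hz : sh a bs m = 0 := by
            by_contra hc
            exact hnp (Finset.mem_image.mpr ⟨(a, bs), mem_shS_of_sh_ne_zero hc, rfl⟩)
          simp [hz]
        · simp [hb]
    rw [← Finset.sum_subset himg hzero, Finset.sum_image hinj]
    apply Finset.sum_congr rfl
    rintro ⟨a, b⟩ _
    simp [hA2]

lemma shS_nil {𝒩 : Type*} : (shS ([] : List 𝒩)) = {([], [])} := rfl

section Main
variable {𝒩 A : Type*} [Ring A] (B : 𝒩 → A)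

/-- ordered product over `a ++ reverse b` -/
noncomputable def Pw (p : List 𝒩 × List 𝒩) : A := ((p.1 ++ p.2.reverse).map B).prod

lemma Pw_cons_left (x : 𝒩) (a b : List 𝒩) : Pw B (x :: a, b) = B x * Pw B (a, b) := by
  simp [Pw]

lemma Pw_cons_right (x : 𝒩) (a b : List 𝒩) : Pw B (a, x :: b) = Pw B (a, b) * B x := by
  simp [Pw, List.reverse_cons, ← List.append_assoc, mul_assoc]

lemma comm_nat {A : Type*} [Ring A] (s : ℕ) (X P : A) :
    X * (s : A) * P = (s : A) * (X * P) := by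
  rw [← (Nat.cast_commute s X).eq, mul_assoc]

lemma pull_left {A : Type*} [Ring A] {s Y C : A} (P : A)
    (h1 : Commute C s) (h2 : Commute C Y) :
    s * (Y * (C * P)) = C * (s * (Y * P)) := by
  simp only [← mul_assoc]
  rw [mul_assoc s Y C, ← h2.eq, ← mul_assoc s C Y, ← h1.eq]

/-- The auxiliary vanishing sum. -/
lemma G_zero : ∀ (n : List 𝒩), n ≠ [] →
    ∑ p ∈ shS n, (sh p.1 p.2 n : A) * ((-1 : A) ^ p.2.length * Pw B p) = 0 := by
  intro n
  induction n with
  | nil => intro h; exact absurd rfl h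
  | cons x m ih =>
    intro _
    rw [sum_sh_cons x m (fun p => (-1 : A) ^ p.2.length * Pw B p)]
    rcases eq_or_ne m [] with rfl | hm
    · rw [shS_nil]
      simp [sh, Pw]
    · have key1 : ∀ p : List 𝒩 × List 𝒩,
          (sh p.1 p.2 m : A) * ((-1 : A) ^ p.2.length * Pw B (x :: p.1, p.2))
            = B x * ((sh p.1 p.2 m : A) * ((-1 : A) ^ p.2.length * Pw B p)) := by
        intro p
        rw [Pw_cons_left]
        exact pull_left _ (Nat.cast_commute _ _).symm ((Commute.neg_one_right _).pow_right _)
      have key2 : ∀ p : List 𝒩 × List 𝒩,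
          (sh p.1 p.2 m : A) * ((-1 : A) ^ (x :: p.2).length * Pw B (p.1, x :: p.2))
            = -(((sh p.1 p.2 m : A) * ((-1 : A) ^ p.2.length * Pw B p)) * B x) := by
        intro p
        rw [Pw_cons_right, List.length_cons, pow_succ, mul_neg_one]
        noncomm_ring
      calc (∑ p ∈ shS m, (sh p.1 p.2 m : A) * ((-1:A) ^ p.2.length * Pw B (x :: p.1, p.2)))
            + ∑ p ∈ shS m, (sh p.1 p.2 m : A) * ((-1:A) ^ (x :: p.2).length * Pw B (p.1, x :: p.2))
          = (∑ p ∈ shS m, B x * ((sh p.1 p.2 m : A) * ((-1:A) ^ p.2.length * Pw B p)))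
            + ∑ p ∈ shS m, -(((sh p.1 p.2 m : A) * ((-1:A) ^ p.2.length * Pw B p)) * B x) := by
            rw [Finset.sum_congr rfl (fun p _ => key1 p), Finset.sum_congr rfl (fun p _ => key2 p)]
        _ = B x * (∑ p ∈ shS m, (sh p.1 p.2 m : A) * ((-1:A) ^ p.2.length * Pw B p))
            - (∑ p ∈ shS m, (sh p.1 p.2 m : A) * ((-1:A) ^ p.2.length * Pw B p)) * B x := by
            rw [Finset.sum_neg_distrib, ← Finset.mul_sum, ← Finset.sum_mul, ← sub_eq_add_neg]
        _ = 0 := by rw [ih hm]; simp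

/-- The main sum computes the iterated commutator. -/
lemma H_eq : ∀ (n : List 𝒩), n ≠ [] →
    ∑ p ∈ shS n, (sh p.1 p.2 n : A)
        * ((-1 : A) ^ p.2.length * (p.1.length : A) * Pw B p) = lieWord B n := by
  intro n
  induction n with
  | nil => intro h; exact absurd rfl h
  | cons x m ih =>
    intro _
    rw [sum_sh_cons x m (fun p => (-1 : A) ^ p.2.length * (p.1.length : A) * Pw B p)]
    rcases eq_or_ne m [] with rfl | hm
    · rw [shS_nil]
      simp [sh, Pw, lieWord]
    · have key1 : ∀ p : List 𝒩 × List 𝒩,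
          (sh p.1 p.2 m : A) * ((-1 : A) ^ p.2.length * ((x :: p.1).length : A) * Pw B (x :: p.1, p.2))
            = B x * ((sh p.1 p.2 m : A) * ((-1 : A) ^ p.2.length * (p.1.length : A) * Pw B p))
              + B x * ((sh p.1 p.2 m : A) * ((-1 : A) ^ p.2.length * Pw B p)) := by
        intro p
        rw [Pw_cons_left, List.length_cons]
        push_cast
        rw [mul_add ((-1:A) ^ p.2.length), mul_one, add_mul, mul_add]
        congr 1
        · exact pull_left (Pw B p) (Nat.cast_commute (sh p.1 p.2 m) (B x)).symm
            (((Commute.neg_one_right (B x)).pow_right p.2.length).mul_right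
              (Nat.cast_commute p.1.length (B x)).symm)
        · exact pull_left _ (Nat.cast_commute _ _).symm ((Commute.neg_one_right _).pow_right _)
      have key2 : ∀ p : List 𝒩 × List 𝒩,
          (sh p.1 p.2 m : A) * ((-1 : A) ^ (x :: p.2).length * (p.1.length : A) * Pw B (p.1, x :: p.2))
            = -(((sh p.1 p.2 m : A) * ((-1 : A) ^ p.2.length * (p.1.length : A) * Pw B p)) * B x) := by
        intro p
        rw [Pw_cons_right, List.length_cons, pow_succ, mul_neg_one]
        noncomm_ring
      calc (∑ p ∈ shS m, (sh p.1 p.2 m : A)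
              * ((-1:A) ^ p.2.length * ((x :: p.1).length : A) * Pw B (x :: p.1, p.2)))
            + ∑ p ∈ shS m, (sh p.1 p.2 m : A)
              * ((-1:A) ^ (x :: p.2).length * (p.1.length : A) * Pw B (p.1, x :: p.2))
          = (∑ p ∈ shS m, (B x * ((sh p.1 p.2 m : A) * ((-1:A) ^ p.2.length * (p.1.length : A) * Pw B p))
              + B x * ((sh p.1 p.2 m : A) * ((-1:A) ^ p.2.length * Pw B p))))
            + ∑ p ∈ shS m, -(((sh p.1 p.2 m : A) * ((-1:A) ^ p.2.length * (p.1.length : A) * Pw B p)) * B x) := by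
            rw [Finset.sum_congr rfl (fun p _ => key1 p), Finset.sum_congr rfl (fun p _ => key2 p)]
        _ = B x * (∑ p ∈ shS m, (sh p.1 p.2 m : A) * ((-1:A) ^ p.2.length * (p.1.length : A) * Pw B p))
            + B x * (∑ p ∈ shS m, (sh p.1 p.2 m : A) * ((-1:A) ^ p.2.length * Pw B p))
            - (∑ p ∈ shS m, (sh p.1 p.2 m : A) * ((-1:A) ^ p.2.length * (p.1.length : A) * Pw B p)) * B x := by
            rw [Finset.sum_add_distrib, Finset.sum_neg_distrib, ← Finset.mul_sum, ← Finset.mul_sum,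
              ← Finset.sum_mul, ← sub_eq_add_neg]
        _ = B x * lieWord B m - lieWord B m * B x := by
            rw [ih hm, G_zero B m hm]; simp
        _ = lieWord B (x :: m) := by
            obtain ⟨y, t, rfl⟩ : ∃ y t, m = y :: t := by
              cases m with
              | nil => exact absurd rfl hm
              | cons y t => exact ⟨y, t, rfl⟩
            rfl

end Main


/-- expansion of the iterated commutator:
`B_{[n]} = ∑_{(a,b)} (−1)^{r(b)} r(a) sh^{a,b}_n B_{a b~}`,
where `b~` is the reversal of `b` and `B_w` is the ordered product. -/
theorem lieWord_expansion
    {𝒩 A : Type*} [Ring A] (B : 𝒩 → A) (n : List 𝒩) (hn : n ≠ []) :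
    lieWord B n =
      ∑ᶠ p : List 𝒩 × List 𝒩,
        (-1 : A) ^ p.2.length * (p.1.length : A) * (sh p.1 p.2 n : A) *
          ((p.1 ++ p.2.reverse).map B).prod := by
  classical
  have hsupp : (Function.support fun p : List 𝒩 × List 𝒩 =>
      (-1 : A) ^ p.2.length * (p.1.length : A) * (sh p.1 p.2 n : A) *
        ((p.1 ++ p.2.reverse).map B).prod) ⊆ ↑(shS n) := by
    intro p hp
    have : sh p.1 p.2 n ≠ 0 := by
      intro hz
      apply hp
      simp [hz]
    exact mem_shS_of_sh_ne_zero this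
  rw [finsum_eq_finset_sum_of_support_subset _ hsupp, ← H_eq B n hn]
  apply Finset.sum_congr rfl
  intro p _
  rw [show ((p.1 ++ p.2.reverse).map B).prod = Pw B p from rfl]
  rw [comm_nat (sh p.1 p.2 n) ((-1:A) ^ p.2.length * (p.1.length : A)) (Pw B p)]
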